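/- Let X ∈ M_{n×p} have singular value decomposition X = UΣV* with Σ = diag(σ_1,…,σ_n), and let ε > 0. Then the unique minimizer of 𝒥(X,W) = ½(‖W^{1/2}X‖_F² + ‖W^{−1/2}‖_F²) over the set {W ∈ M_{n×n} : W Hermitian, 0 ≺ W ⪯ ε^{−1}I} is W̄ = U Σ_ε^{−1} U*, where Σ_ε = diag(max{σ_j, ε}). -/

import Mathlib

/-!
Write `2 𝒥(X, W) = Re tr (W X Xᴴ) + Re tr W⁻¹`. With `Δ = W - B` and `M = B⁻¹ Δ` one has the exact
expansion `W⁻¹ - B⁻¹ = -B⁻¹ Δ B⁻¹ + M W⁻¹ Mᴴ`, whose last term has positive trace unless `W = B`; so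
`W ↦ tr W⁻¹` lies strictly above its tangent at `B`, and `B` is the unique minimizer of `𝒥(X, ·)`
on the feasible set once the first-order condition `Re tr ((W - B) (X Xᴴ - B⁻²)) ≥ 0` holds there.
For `B = W̄`, in the basis `U` this trace is `∑ᵢ ((Uᴴ W U)ᵢᵢ - 1 / max(σᵢ, ε)) (σᵢ² - max(σᵢ, ε)²)`:
the `i`-th term vanishes when `σᵢ ≥ ε`, and when `σᵢ < ε` both factors are `≤ 0` since `W ⪯ ε⁻¹ I`.
-/

open Matrix
open scoped ComplexOrder

namespace IRLSM

/-- Frobenius inner product `⟨X,Y⟩ = Tr(X Yᴴ)`. -/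
noncomputable def frobInner {n p : ℕ} (X Y : Matrix (Fin n) (Fin p) ℂ) : ℂ :=
  Matrix.trace (X * Yᴴ)

/-- Frobenius norm. -/
noncomputable def frobNorm {n p : ℕ} (X : Matrix (Fin n) (Fin p) ℂ) : ℝ :=
  Real.sqrt (∑ i, ∑ j, Complex.normSq (X i j))

/-- Singular values of `X` in nonincreasing order, `sv X 0 = σ₁ ≥ sv X 1 = σ₂ ≥ …`;
indices `≥ n` give `0`. -/
noncomputable def sv {n p : ℕ} (X : Matrix (Fin n) (Fin p) ℂ) : ℕ → ℝ :=
  fun i => ((List.ofFn fun j : Fin n =>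
      Real.sqrt ((Matrix.isHermitian_mul_conjTranspose_self X).eigenvalues j)).mergeSort
      (fun a b => decide (b ≤ a))).getD i 0

/-- Nuclear norm `‖X‖_* = ∑ σᵢ(X)`. -/
noncomputable def nuclearNorm {n p : ℕ} (X : Matrix (Fin n) (Fin p) ℂ) : ℝ :=
  ∑ i : Fin n, sv X (i : ℕ)

/-- Positive square root of a positive semidefinite matrix (junk value `0` otherwise). -/
noncomputable def matSqrt {n : ℕ} (W : Matrix (Fin n) (Fin n) ℂ) : Matrix (Fin n) (Fin n) ℂ :=
  @dite _ W.PosSemidef (Classical.dec _) (fun h => h.1.eigenvectorUnitary.1 *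
    diagonal ((↑) ∘ (√·) ∘ h.1.eigenvalues) * (star h.1.eigenvectorUnitary : Matrix (Fin n) (Fin n) ℂ)) (fun _ => 0)

/-- The functional `𝒥(X,W) = ½(‖W^{1/2}X‖_F² + ‖W^{-1/2}‖_F²)`. -/
noncomputable def Jfun {n p : ℕ} (X : Matrix (Fin n) (Fin p) ℂ)
    (W : Matrix (Fin n) (Fin n) ℂ) : ℝ :=
  (frobNorm (matSqrt W * X) ^ 2 + frobNorm (matSqrt W⁻¹) ^ 2) / 2

/-- The restricted isometry constant `δ_k(𝒮)`: the smallest `δ ≥ 0` such that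
`(1-δ)‖X‖_F² ≤ ‖𝒮(X)‖² ≤ (1+δ)‖X‖_F²` for all `X` of rank at most `k`. -/
noncomputable def ripConst {n p m : ℕ}
    (S : Matrix (Fin n) (Fin p) ℂ →ₗ[ℂ] (Fin m → ℂ)) (k : ℕ) : ℝ :=
  sInf {δ : ℝ | 0 ≤ δ ∧ ∀ X : Matrix (Fin n) (Fin p) ℂ, X.rank ≤ k →
    (1 - δ) * frobNorm X ^ 2 ≤ ∑ i, Complex.normSq (S X i) ∧
      ∑ i, Complex.normSq (S X i) ≤ (1 + δ) * frobNorm X ^ 2}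

/-- The rank null space property of order `k`. -/
def RNSP {n p m : ℕ} (S : Matrix (Fin n) (Fin p) ℂ →ₗ[ℂ] (Fin m → ℂ)) (k : ℕ) : Prop :=
  ∀ H : Matrix (Fin n) (Fin p) ℂ, S H = 0 → H ≠ 0 →
    ∀ H₁ H₂ : Matrix (Fin n) (Fin p) ℂ, H = H₁ + H₂ → H₁.rank ≤ k →
      nuclearNorm H₁ < nuclearNorm H₂

/-- The strong rank null space property of order `k` with constant `η`. -/
def SRNSP {n p m : ℕ} (S : Matrix (Fin n) (Fin p) ℂ →ₗ[ℂ] (Fin m → ℂ)) (k : ℕ) (η : ℝ) : Prop :=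
  ∀ X : Matrix (Fin n) (Fin p) ℂ, S X = 0 → X ≠ 0 →
    ∀ X₁ X₂ : Matrix (Fin n) (Fin p) ℂ, X = X₁ + X₂ → X₁.rank ≤ k →
      ∃ H₁ H₂ : Matrix (Fin n) (Fin p) ℂ, X = H₁ + H₂ ∧ H₁.rank ≤ 2 * k ∧
        frobInner H₁ H₂ = 0 ∧ X₁ * H₂ᴴ = 0 ∧ X₁ᴴ * H₂ = 0 ∧
        nuclearNorm H₁ ≤ η * nuclearNorm H₂

/-- Best `k`-rank approximation error in the nuclear norm, `ρ_k(X)_*`. -/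
noncomputable def rhoNuc {n p : ℕ} (k : ℕ) (X : Matrix (Fin n) (Fin p) ℂ) : ℝ :=
  sInf ((fun Z => nuclearNorm (X - Z)) '' {Z : Matrix (Fin n) (Fin p) ℂ | Z.rank ≤ k})

/-- `j^ε(u) = |u|` for `|u| ≥ ε` and `(u² + ε²)/(2ε)` otherwise. -/
noncomputable def jeps (ε u : ℝ) : ℝ :=
  if ε ≤ |u| then |u| else (u ^ 2 + ε ^ 2) / (2 * ε)

/-- The functional `𝒥_ε(X) = ∑ᵢ j^ε(σᵢ(X))`. -/
noncomputable def Jeps {n p : ℕ} (ε : ℝ) (X : Matrix (Fin n) (Fin p) ℂ) : ℝ :=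
  ∑ i : Fin n, jeps ε (sv X (i : ℕ))

/-- `(X^ℓ, W^ℓ, ε_ℓ)_ℓ` is an output of the IRLS-M algorithm with measurement map `S`,
data `M`, parameters `γ > 0` and `K`.  Here `X (ℓ+1)` is the weighted least squares
minimizer for the weight `W ℓ`, `ε (ℓ+1) = min (ε ℓ) (γ σ_{K+1}(X^{ℓ+1}))`, and
`W (ℓ+1)` is built from an eigendecomposition of `X^{ℓ+1}(X^{ℓ+1})ᴴ` together with the
`ε`-stabilization of the singular values.  If `ε` reaches `0` the algorithm stops. -/
structure IsIRLSM {n p m : ℕ} (S : Matrix (Fin n) (Fin p) ℂ →ₗ[ℂ] (Fin m → ℂ))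
    (M : Fin m → ℂ) (γ : ℝ) (K : ℕ)
    (X : ℕ → Matrix (Fin n) (Fin p) ℂ)
    (W : ℕ → Matrix (Fin n) (Fin n) ℂ)
    (ε : ℕ → ℝ) : Prop where
  w_init : W 0 = 1
  eps_init : ε 0 = 1
  x_feasible : ∀ ℓ : ℕ, ε ℓ ≠ 0 → S (X (ℓ + 1)) = M
  x_min : ∀ ℓ : ℕ, ε ℓ ≠ 0 → ∀ Y : Matrix (Fin n) (Fin p) ℂ, S Y = M →
    frobNorm (matSqrt (W ℓ) * X (ℓ + 1)) ^ 2 ≤ frobNorm (matSqrt (W ℓ) * Y) ^ 2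
  eps_update : ∀ ℓ : ℕ, ε ℓ ≠ 0 → ε (ℓ + 1) = min (ε ℓ) (γ * sv (X (ℓ + 1)) K)
  w_update : ∀ ℓ : ℕ, ε ℓ ≠ 0 → ε (ℓ + 1) ≠ 0 →
    ∃ U : Matrix (Fin n) (Fin n) ℂ, U * Uᴴ = 1 ∧ Uᴴ * U = 1 ∧
      X (ℓ + 1) * (X (ℓ + 1))ᴴ =
        U * Matrix.diagonal (fun i : Fin n => ((sv (X (ℓ + 1)) (i : ℕ) : ℂ)) ^ 2) * Uᴴ ∧
      W (ℓ + 1) =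
        U * Matrix.diagonal
            (fun i : Fin n => (((max (sv (X (ℓ + 1)) (i : ℕ)) (ε (ℓ + 1)) : ℝ) : ℂ))⁻¹) * Uᴴ
  w_stop : ∀ ℓ : ℕ, ε ℓ ≠ 0 → ε (ℓ + 1) = 0 → W (ℓ + 1) = W ℓ
  stopped : ∀ ℓ : ℕ, ε ℓ = 0 → X (ℓ + 1) = X ℓ ∧ W (ℓ + 1) = W ℓ ∧ ε (ℓ + 1) = 0

variable {n p : ℕ}

lemma frobNorm_sq (Y : Matrix (Fin n) (Fin p) ℂ) :
    frobNorm Y ^ 2 = (trace (Y * Yᴴ)).re := by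
  have h : trace (Y * Yᴴ) = ((∑ i, ∑ j, Complex.normSq (Y i j) : ℝ) : ℂ) := by
    push_cast
    simp [trace, mul_apply, Complex.mul_conj]
  rw [frobNorm, Real.sq_sqrt (Finset.sum_nonneg fun i _ => Finset.sum_nonneg fun j _ =>
    Complex.normSq_nonneg (Y i j)), h, Complex.ofReal_re]

lemma matSqrt_eq_cfc {W : Matrix (Fin n) (Fin n) ℂ} (hW : W.PosSemidef) :
    matSqrt W = cfc Real.sqrt W := by
  rw [hW.1.cfc_eq, IsHermitian.cfc, Unitary.conjStarAlgAut_apply, matSqrt, dif_pos hW]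
  rfl

open scoped MatrixOrder in
lemma matSqrt_mul_self {W : Matrix (Fin n) (Fin n) ℂ} (hW : W.PosSemidef) :
    matSqrt W * matSqrt W = W := by
  rw [matSqrt_eq_cfc hW, ← cfc_mul Real.sqrt Real.sqrt W]
  conv_rhs => rw [← cfc_id' ℝ W]
  refine cfc_congr fun x hx => Real.mul_self_sqrt ?_
  exact quasispectrum_nonneg_of_nonneg W hW.nonneg x (spectrum_subset_quasispectrum ℝ W hx)

lemma conjTranspose_matSqrt {W : Matrix (Fin n) (Fin n) ℂ} (hW : W.PosSemidef) :
    (matSqrt W)ᴴ = matSqrt W := by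
  rw [matSqrt_eq_cfc hW]
  exact (cfc_predicate Real.sqrt W).star_eq

lemma two_mul_Jfun (X : Matrix (Fin n) (Fin p) ℂ) {W : Matrix (Fin n) (Fin n) ℂ} (hW : W.PosDef) :
    2 * Jfun X W = (trace (W * (X * Xᴴ))).re + (trace W⁻¹).re := by
  have hW' := hW.posSemidef
  have hWinv := hW.inv.posSemidef
  rw [Jfun, mul_div_cancel₀ _ two_ne_zero, frobNorm_sq, frobNorm_sq, conjTranspose_mul,
    conjTranspose_matSqrt hW', conjTranspose_matSqrt hWinv, matSqrt_mul_self hWinv,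
    ← Matrix.mul_assoc, trace_mul_comm, ← Matrix.mul_assoc, ← Matrix.mul_assoc, matSqrt_mul_self hW',
    Matrix.mul_assoc]

lemma inv_sub_inv_eq {m R : Type*} [Fintype m] [DecidableEq m] [CommRing R]
    {W B : Matrix m m R} (hW : IsUnit W.det) (hB : IsUnit B.det) :
    W⁻¹ - B⁻¹ = -(B⁻¹ * (W - B) * B⁻¹) + B⁻¹ * (W - B) * W⁻¹ * ((W - B) * B⁻¹) := by
  simp only [mul_sub, sub_mul, mul_assoc, mul_nonsing_inv _ hW, mul_nonsing_inv _ hB,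
    nonsing_inv_mul _ hB, nonsing_inv_mul_cancel_left _ _ hW, mul_one, one_mul]
  abel

lemma re_trace_mul_mul_conjTranspose_pos {P M : Matrix (Fin n) (Fin n) ℂ} (hP : P.PosDef)
    (hM : M ≠ 0) : 0 < (trace (M * P * Mᴴ)).re := by
  have hP' := hP.posSemidef
  have hMS : M * matSqrt P ≠ 0 := fun h => hM <| by
    rw [← mul_nonsing_inv_cancel_right (A := P) M (hP.isUnit.map detMonoidHom),
      ← matSqrt_mul_self hP', ← mul_assoc, h, zero_mul, zero_mul]
  have hfac : M * P * Mᴴ = M * matSqrt P * (M * matSqrt P)ᴴ := by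
    rw [conjTranspose_mul, conjTranspose_matSqrt hP', ← mul_assoc, mul_assoc M (matSqrt P),
      matSqrt_mul_self hP']
  rw [hfac]
  exact (Complex.lt_def.1 <| lt_of_le_of_ne (posSemidef_self_mul_conjTranspose _).trace_nonneg
    (Ne.symm <| mt trace_mul_conjTranspose_self_eq_zero_iff.1 hMS)).1

lemma re_trace_inv_tangent_lt {W B : Matrix (Fin n) (Fin n) ℂ} (hW : W.PosDef) (hB : B.PosDef)
    (hne : W ≠ B) :
    (trace B⁻¹).re - (trace ((W - B) * (B⁻¹ * B⁻¹))).re < (trace W⁻¹).re := by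
  have hWdet : IsUnit W.det := hW.isUnit.map detMonoidHom
  have hBdet : IsUnit B.det := hB.isUnit.map detMonoidHom
  have hM : B⁻¹ * (W - B) ≠ 0 := fun h => sub_ne_zero.2 hne <| by
    rw [← mul_nonsing_inv_cancel_left (A := B) (W - B) hBdet, h, mul_zero]
  have hMH : (B⁻¹ * (W - B))ᴴ = (W - B) * B⁻¹ := by
    rw [conjTranspose_mul, (hW.1.sub hB.1).eq, hB.inv.1.eq]
  have hgap := re_trace_mul_mul_conjTranspose_pos hW.inv hM
  have hid := congrArg (fun A => (trace A).re) (inv_sub_inv_eq hWdet hBdet)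
  rw [hMH] at hgap
  simp only [trace_sub, trace_add, trace_neg, Complex.sub_re, Complex.add_re, Complex.neg_re] at hid
  rw [trace_mul_cycle, ← mul_assoc, trace_mul_comm, mul_assoc] at hid
  linarith

lemma re_trace_mul_add_re_trace_inv_lt {A W B : Matrix (Fin n) (Fin n) ℂ} (hW : W.PosDef)
    (hB : B.PosDef) (hne : W ≠ B) (hvar : 0 ≤ (trace ((W - B) * (A - B⁻¹ * B⁻¹))).re) :
    (trace (B * A)).re + (trace B⁻¹).re < (trace (W * A)).re + (trace W⁻¹).re := by
  have := re_trace_inv_tangent_lt hW hB hne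
  rw [mul_sub, trace_sub, Complex.sub_re, sub_mul, trace_sub, Complex.sub_re] at hvar
  linarith

def rectDiagonal (σ : Fin n → ℝ) : Matrix (Fin n) (Fin p) ℂ :=
  Matrix.of fun i j => if (i : ℕ) = (j : ℕ) then (σ i : ℂ) else 0

lemma rectDiagonal_mul_conjTranspose (hnp : n ≤ p) (σ : Fin n → ℝ) :
    rectDiagonal (p := p) σ * (rectDiagonal (p := p) σ)ᴴ =
      diagonal fun i => ((σ i ^ 2 : ℝ) : ℂ) := by
  ext i k
  rw [mul_apply, Finset.sum_eq_single ⟨i, i.2.trans_le hnp⟩]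
  · by_cases h : i = k
    · subst h
      simp [rectDiagonal, sq]
    · simp [rectDiagonal, h, Fin.val_ne_of_ne (Ne.symm h)]
  · intro j _ hj
    simp [rectDiagonal, show (i : ℕ) ≠ j from fun h => hj (Fin.ext h.symm)]
  · simp

lemma mul_conjTranspose_eq_of_eq_svd (hnp : n ≤ p) {X : Matrix (Fin n) (Fin p) ℂ}
    {U : Matrix (Fin n) (Fin n) ℂ} {V : Matrix (Fin p) (Fin p) ℂ} (hV : Vᴴ * V = 1)
    {σ : Fin n → ℝ} (hX : X = U * rectDiagonal (p := p) σ * Vᴴ) :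
    X * Xᴴ = U * (diagonal fun i => ((σ i ^ 2 : ℝ) : ℂ)) * Uᴴ := by
  have hVV : ∀ Z : Matrix (Fin p) (Fin n) ℂ, Vᴴ * (V * Z) = Z := fun Z => by
    rw [← Matrix.mul_assoc, hV, Matrix.one_mul]
  rw [hX, ← rectDiagonal_mul_conjTranspose hnp]
  simp only [conjTranspose_mul, conjTranspose_conjTranspose, Matrix.mul_assoc, hVV]

lemma trace_conjStarAlgAut {m : Type*} [Fintype m] [DecidableEq m]
    (u : unitary (Matrix m m ℂ)) (A : Matrix m m ℂ) :
    trace (Unitary.conjStarAlgAut ℝ _ u A) = trace A := by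
  rw [Unitary.conjStarAlgAut_apply, trace_mul_cycle, Unitary.coe_star_mul_self, Matrix.one_mul]

lemma sub_inv_max_mul_sq_sub_sq_max_nonneg {s ε w : ℝ} (hε : 0 < ε) (hs : 0 ≤ s)
    (hw : w ≤ ε⁻¹) : 0 ≤ (w - (max s ε)⁻¹) * (s ^ 2 - max s ε ^ 2) := by
  rcases le_total ε s with h | h
  · simp [max_eq_left h]
  · rw [max_eq_right h]
    exact mul_nonneg_of_nonpos_of_nonpos (by linarith) (by nlinarith)

lemma re_trace_sub_diagonal_mul_diagonal_nonneg {ε : ℝ} (hε : 0 < ε) {σ : Fin n → ℝ}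
    (hσ : ∀ i, 0 ≤ σ i) {W : Matrix (Fin n) (Fin n) ℂ}
    (hW : (ε⁻¹ • (1 : Matrix (Fin n) (Fin n) ℂ) - W).PosSemidef) :
    0 ≤ (trace ((W - diagonal fun i => ((max (σ i) ε : ℝ) : ℂ)⁻¹) *
      diagonal fun i => ((σ i ^ 2 - max (σ i) ε ^ 2 : ℝ) : ℂ))).re := by
  simp only [trace, diag_apply, mul_diagonal, Complex.re_sum, Complex.re_mul_ofReal]
  refine Finset.sum_nonneg fun i _ => ?_
  have hWii : (W i i).re ≤ ε⁻¹ := by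
    simpa using (Complex.le_def.1 (hW.diag_nonneg (i := i))).1
  simpa [← Complex.ofReal_inv] using sub_inv_max_mul_sq_sub_sq_max_nonneg hε (hσ i) hWii

section StabilizedWeight

variable (u : unitary (Matrix (Fin n) (Fin n) ℂ)) (σ : Fin n → ℝ) (ε : ℝ)

/-- The weight `W̄ = U Σ_ε⁻¹ Uᴴ` of the paper. -/
noncomputable def stabilizedWeight : Matrix (Fin n) (Fin n) ℂ :=
  Unitary.conjStarAlgAut ℝ _ u (diagonal fun i => ((max (σ i) ε : ℝ) : ℂ)⁻¹)

variable {ε}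

lemma posDef_stabilizedWeight (hε : 0 < ε) : (stabilizedWeight u σ ε).PosDef := by
  rw [stabilizedWeight, Unitary.conjStarAlgAut_apply,
    Unitary.isUnit_coe.posDef_star_right_conjugate_iff, posDef_diagonal_iff]
  intro i
  rw [← Complex.ofReal_inv, Complex.zero_lt_real]
  exact inv_pos.2 (hε.trans_le (le_max_right _ _))

lemma posSemidef_smul_one_sub_stabilizedWeight (hε : 0 < ε) :
    (ε⁻¹ • (1 : Matrix (Fin n) (Fin n) ℂ) - stabilizedWeight u σ ε).PosSemidef := by
  have hdiag : ε⁻¹ • (1 : Matrix (Fin n) (Fin n) ℂ) -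
      diagonal (fun i => ((max (σ i) ε : ℝ) : ℂ)⁻¹) =
      diagonal fun i => ((ε⁻¹ - (max (σ i) ε)⁻¹ : ℝ) : ℂ) := by
    ext i j
    by_cases h : i = j
    · simp [h]
    · simp [h, one_apply]
  rw [stabilizedWeight, ← map_one (Unitary.conjStarAlgAut ℝ _ u), ← map_smul, ← map_sub, hdiag,
    Unitary.conjStarAlgAut_apply, Unitary.isUnit_coe.posSemidef_star_right_conjugate_iff,
    posSemidef_diagonal_iff]
  intro i
  rw [Complex.zero_le_real, sub_nonneg]
  exact inv_anti₀ hε (le_max_right _ _)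

lemma inv_stabilizedWeight (hε : 0 < ε) : (stabilizedWeight u σ ε)⁻¹ =
    Unitary.conjStarAlgAut ℝ _ u (diagonal fun i => ((max (σ i) ε : ℝ) : ℂ)) := by
  refine inv_eq_right_inv ?_
  rw [stabilizedWeight, ← map_mul, diagonal_mul_diagonal, ← map_one (Unitary.conjStarAlgAut ℝ _ u),
    ← diagonal_one]
  congr 2
  funext i
  exact inv_mul_cancel₀ (Complex.ofReal_ne_zero.2 (hε.trans_le (le_max_right _ _)).ne')

lemma re_trace_sub_stabilizedWeight_mul_nonneg (hε : 0 < ε) (hσ : ∀ i, 0 ≤ σ i)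
    {W : Matrix (Fin n) (Fin n) ℂ} (hW : (ε⁻¹ • (1 : Matrix (Fin n) (Fin n) ℂ) - W).PosSemidef) :
    0 ≤ (trace ((W - stabilizedWeight u σ ε) *
      (Unitary.conjStarAlgAut ℝ _ u (diagonal fun i => ((σ i ^ 2 : ℝ) : ℂ)) -
        (stabilizedWeight u σ ε)⁻¹ * (stabilizedWeight u σ ε)⁻¹))).re := by
  set φ := Unitary.conjStarAlgAut ℝ (Matrix (Fin n) (Fin n) ℂ) u
  have hgrad : φ (diagonal fun i => ((σ i ^ 2 : ℝ) : ℂ)) -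
      (stabilizedWeight u σ ε)⁻¹ * (stabilizedWeight u σ ε)⁻¹ =
      φ (diagonal fun i => ((σ i ^ 2 - max (σ i) ε ^ 2 : ℝ) : ℂ)) := by
    rw [inv_stabilizedWeight u σ hε, ← map_mul, diagonal_mul_diagonal, ← map_sub, diagonal_sub]
    congr 2
    funext i
    push_cast
    ring
  rw [hgrad, stabilizedWeight, ← φ.apply_symm_apply W, ← map_sub, ← map_mul, trace_conjStarAlgAut]
  refine re_trace_sub_diagonal_mul_diagonal_nonneg hε hσ ?_
  rw [← map_one φ.symm, ← map_smul, ← map_sub, Unitary.conjStarAlgAut_symm_apply,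
    Unitary.isUnit_coe.posSemidef_star_left_conjugate_iff]
  exact hW

end StabilizedWeight

theorem statement4_general {n p : ℕ} (hnp : n ≤ p) (ε : ℝ) (hε : 0 < ε)
    (X : Matrix (Fin n) (Fin p) ℂ)
    (U : Matrix (Fin n) (Fin n) ℂ) (hU : U * Uᴴ = 1) (hU' : Uᴴ * U = 1)
    (V : Matrix (Fin p) (Fin p) ℂ) (hV' : Vᴴ * V = 1)
    (σ : Fin n → ℝ) (hσ : ∀ i, 0 ≤ σ i)
    (hX : X = U * (Matrix.of fun (i : Fin n) (j : Fin p) =>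
        if (i : ℕ) = (j : ℕ) then (σ i : ℂ) else 0) * Vᴴ) :
    (U * Matrix.diagonal (fun i : Fin n => ((max (σ i) ε : ℝ) : ℂ)⁻¹) * Uᴴ) ∈
        {W : Matrix (Fin n) (Fin n) ℂ |
          W.PosDef ∧ (ε⁻¹ • (1 : Matrix (Fin n) (Fin n) ℂ) - W).PosSemidef} ∧
    (∀ W : Matrix (Fin n) (Fin n) ℂ,
        W.PosDef → (ε⁻¹ • (1 : Matrix (Fin n) (Fin n) ℂ) - W).PosSemidef →
        Jfun X (U * Matrix.diagonal (fun i : Fin n => ((max (σ i) ε : ℝ) : ℂ)⁻¹) * Uᴴ) ≤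
          Jfun X W) ∧
    (∀ W : Matrix (Fin n) (Fin n) ℂ,
        W.PosDef → (ε⁻¹ • (1 : Matrix (Fin n) (Fin n) ℂ) - W).PosSemidef →
        Jfun X W =
          Jfun X (U * Matrix.diagonal (fun i : Fin n => ((max (σ i) ε : ℝ) : ℂ)⁻¹) * Uᴴ) →
        W = U * Matrix.diagonal (fun i : Fin n => ((max (σ i) ε : ℝ) : ℂ)⁻¹) * Uᴴ) := by
  let u : unitary (Matrix (Fin n) (Fin n) ℂ) := ⟨U, Unitary.mem_iff.2 ⟨hU', hU⟩⟩
  have hWbar : U * diagonal (fun i => ((max (σ i) ε : ℝ) : ℂ)⁻¹) * Uᴴ = stabilizedWeight u σ ε :=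
    rfl
  have hXX : X * Xᴴ = Unitary.conjStarAlgAut ℝ _ u (diagonal fun i => ((σ i ^ 2 : ℝ) : ℂ)) :=
    mul_conjTranspose_eq_of_eq_svd hnp hV' hX
  have hB := posDef_stabilizedWeight u σ hε
  have hlt : ∀ W : Matrix (Fin n) (Fin n) ℂ, W.PosDef →
      (ε⁻¹ • (1 : Matrix (Fin n) (Fin n) ℂ) - W).PosSemidef → W ≠ stabilizedWeight u σ ε →
      Jfun X (stabilizedWeight u σ ε) < Jfun X W := by
    intro W hW hWle hne
    have := re_trace_mul_add_re_trace_inv_lt hW hB hne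
      (hXX ▸ re_trace_sub_stabilizedWeight_mul_nonneg u σ hε hσ hWle)
    linarith [two_mul_Jfun X hW, two_mul_Jfun X hB]
  rw [hWbar]
  refine ⟨⟨hB, posSemidef_smul_one_sub_stabilizedWeight u σ hε⟩, fun W hW hWle => ?_,
    fun W hW hWle heq => ?_⟩
  · rcases eq_or_ne W (stabilizedWeight u σ ε) with rfl | hne
    · exact le_rfl
    · exact (hlt W hW hWle hne).le
  · by_contra hne
    exact (hlt W hW hWle hne).ne' heq

/-- `W̄ = U Σ_ε⁻¹ U*` is the unique minimizer of `𝒥(X,·)` over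
`{W : 0 ≺ W = W* ⪯ ε⁻¹ I}`. -/
theorem statement4 {n p : ℕ} (hnp : n ≤ p) (ε : ℝ) (hε : 0 < ε)
    (X : Matrix (Fin n) (Fin p) ℂ)
    (U : Matrix (Fin n) (Fin n) ℂ) (hU : U * Uᴴ = 1) (hU' : Uᴴ * U = 1)
    (V : Matrix (Fin p) (Fin p) ℂ) (hV : V * Vᴴ = 1) (hV' : Vᴴ * V = 1)
    (σ : Fin n → ℝ) (hσ : ∀ i, 0 ≤ σ i)
    (hX : X = U * (Matrix.of fun (i : Fin n) (j : Fin p) =>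
        if (i : ℕ) = (j : ℕ) then (σ i : ℂ) else 0) * Vᴴ) :
    (U * Matrix.diagonal (fun i : Fin n => ((max (σ i) ε : ℝ) : ℂ)⁻¹) * Uᴴ) ∈
        {W : Matrix (Fin n) (Fin n) ℂ |
          W.PosDef ∧ (ε⁻¹ • (1 : Matrix (Fin n) (Fin n) ℂ) - W).PosSemidef} ∧
    (∀ W : Matrix (Fin n) (Fin n) ℂ,
        W.PosDef → (ε⁻¹ • (1 : Matrix (Fin n) (Fin n) ℂ) - W).PosSemidef →
        Jfun X (U * Matrix.diagonal (fun i : Fin n => ((max (σ i) ε : ℝ) : ℂ)⁻¹) * Uᴴ) ≤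
          Jfun X W) ∧
    (∀ W : Matrix (Fin n) (Fin n) ℂ,
        W.PosDef → (ε⁻¹ • (1 : Matrix (Fin n) (Fin n) ℂ) - W).PosSemidef →
        Jfun X W =
          Jfun X (U * Matrix.diagonal (fun i : Fin n => ((max (σ i) ε : ℝ) : ℂ)⁻¹) * Uᴴ) →
        W = U * Matrix.diagonal (fun i : Fin n => ((max (σ i) ε : ℝ) : ℂ)⁻¹) * Uᴴ) :=
  statement4_general hnp ε hε X U hU hU' V hV' σ hσ hX

end IRLSM
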